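/- Let m ∈ ℕ, A ⊆ ℕ^m be a complete set of multi-indices, and let P_A be nodes generated per the essential assumptions. Then for every β ∈ A the monomial x^β lies in the span of the Newton polynomials {N_α : α ∈ A, α ≤_L β}; consequently, the change-of-basis matrix CN_A = (c^β_α)_{α,β∈A} from the canonical monomial basis {x^β}_{β∈A} to the Newton basis {N_α}_{α∈A} of Π_A, defined by x^β = Σ_{α∈A} c^β_α N_α, is upper triangular (c^β_α = 0 for α >_L β) and invertible. -/

import Mathlib

open MvPolynomial
open scoped Classical

noncomputable section

/-- The polynomial space `Π_A` spanned by the monomials `x^α`, `α ∈ A`. -/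
def PiA (m : ℕ) (A : Finset (Fin m → ℕ)) : Submodule ℝ (MvPolynomial (Fin m) ℝ) :=
  Submodule.span ℝ ((fun α : Fin m → ℕ => ∏ i, X i ^ α i) '' ↑A)

/-- `A ⊆ ℕ^m` is a complete (downward closed) set of multi-indices. -/
def CompleteIdx {m : ℕ} (A : Finset (Fin m → ℕ)) : Prop :=
  ∀ α ∈ A, ∀ β : Fin m → ℕ, (∀ i, β i ≤ α i) → β ∈ A

/-- The node `p_α = (p_{α₁,1},…,p_{α_m,m})` generated from generating nodes `p`. -/
def node {m : ℕ} (p : Fin m → ℕ → ℝ) (α : Fin m → ℕ) : Fin m → ℝ := fun i => p i (α i)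

/-- The generating nodes `p_{0,i},…,p_{n_i,i}`, `n_i = max_{α∈A} α_i`, are pairwise
distinct in each dimension `i` (essential assumptions, Definition 2.8). -/
def GenDistinct {m : ℕ} (A : Finset (Fin m → ℕ)) (p : Fin m → ℕ → ℝ) : Prop :=
  ∀ i : Fin m, ∀ j k : ℕ, j ≤ A.sup (fun α => α i) → k ≤ A.sup (fun α => α i) →
    p i j = p i k → j = k

/-- The multivariate Newton polynomial `N_α(x) = ∏_i ∏_{j<α_i} (x_i - p_{j,i})`. -/
def newton {m : ℕ} (p : Fin m → ℕ → ℝ) (α : Fin m → ℕ) : MvPolynomial (Fin m) ℝ :=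
  ∏ i, ∏ j ∈ Finset.range (α i), (X i - C (p i j))

/-- `P` is unisolvent with respect to the polynomial subspace `W`: the only
polynomial in `W` vanishing on all of `P` is `0`. -/
def Unisolvent {m : ℕ} (P : Set (Fin m → ℝ)) (W : Submodule ℝ (MvPolynomial (Fin m) ℝ)) :
    Prop :=
  ∀ Q ∈ W, (∀ x ∈ P, eval x Q = 0) → Q = 0

/-- Lexicographic order `<_L` on multi-indices, comparing from the last coordinate
`x_m` down to the first `x_1`. -/
def lexLt {m : ℕ} (α β : Fin m → ℕ) : Prop :=
  ∃ k : Fin m, α k < β k ∧ ∀ j : Fin m, k < j → α j = β j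

/-- `α ≤_L β`. -/
def lexLe {m : ℕ} (α β : Fin m → ℕ) : Prop := α = β ∨ lexLt α β


/-!
Every Newton polynomial `N_δ` has leading monomial `x^δ` with coefficient `1` (under any monomial
order), and all its other monomials `x^γ` satisfy `γ ≤ δ` componentwise; in particular they lie in
`A` when `A` is complete, and `γ <_L δ`. So the matrix expressing the Newton basis in the monomial
basis is unitriangular for `<_L`, and `CN_A` is its inverse, again triangular.
-/

theorem lexLt_iff_toColex_lt {m : ℕ} {α β : Fin m → ℕ} :
    lexLt α β ↔ toColex α < toColex β := by
  constructor <;> rintro ⟨k, h₁, h₂⟩ <;> exact ⟨k, h₂, h₁⟩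

theorem lexLe_of_not_lexLt {m : ℕ} {α β : Fin m → ℕ} (h : ¬ lexLt β α) : lexLe α β := by
  rcases lt_trichotomy (toColex α) (toColex β) with hlt | heq | hgt
  · exact Or.inr (lexLt_iff_toColex_lt.2 hlt)
  · exact Or.inl (toColex.injective heq)
  · exact absurd (lexLt_iff_toColex_lt.2 hgt) h

theorem Matrix.BlockTriangular.det_of_injective {n R ι : Type*} [Fintype n] [DecidableEq n]
    [CommRing R] [LinearOrder ι] {M : Matrix n n R} {b : n → ι} (hM : M.BlockTriangular b)
    (hb : Function.Injective b) : M.det = ∏ i, M i i := by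
  let : LinearOrder n := LinearOrder.lift' b hb
  exact det_of_isUpperTriangular hM

theorem eq_sum_smul_of_mul_eq_one {ι R M : Type*} [Fintype ι] [DecidableEq ι] [CommSemiring R]
    [AddCommMonoid M] [Module R M] {v w : ι → M} {E F : Matrix ι ι R}
    (hw : ∀ j, w j = ∑ i, E i j • v i) (hEF : E * F = 1) (k : ι) :
    v k = ∑ j, F j k • w j := by
  simp_rw [hw, Finset.smul_sum, smul_smul]
  rw [Finset.sum_comm]
  simp_rw [← Finset.sum_smul, mul_comm (F _ k), ← Matrix.mul_apply, hEF, Matrix.one_apply,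
    ite_smul, one_smul, zero_smul, Finset.sum_ite_eq', Finset.mem_univ, if_true]

theorem eq_sum_coeff_smul_prod_X_pow {R : Type*} [CommSemiring R] {m : ℕ}
    {A : Finset (Fin m → ℕ)} {f : MvPolynomial (Fin m) R} (hf : ∀ d ∈ f.support, ⇑d ∈ A) :
    f = ∑ γ : A, coeff (Finsupp.equivFunOnFinite.symm γ.1) f • ∏ i, X i ^ γ.1 i := by
  have hX : ∀ γ : Fin m → ℕ, (∏ i, X i ^ γ i : MvPolynomial (Fin m) R) =
      monomial (Finsupp.equivFunOnFinite.symm γ) 1 := fun γ => by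
    rw [monomial_eq, C_1, one_mul, Finsupp.prod_fintype _ _ fun _ => pow_zero _]
    rfl
  simp_rw [hX, smul_monomial, smul_eq_mul, mul_one]
  calc f = ∑ d ∈ f.support, monomial d (coeff d f) := f.as_sum
    _ = ∑ d ∈ A.map Finsupp.equivFunOnFinite.symm.toEmbedding, monomial d (coeff d f) :=
        Finset.sum_subset (fun d hd => Finset.mem_map_equiv.2 (hf d hd))
          fun d _ hd => by rw [notMem_support_iff.1 hd, monomial_zero]
    _ = _ := (Finset.sum_map _ _ _).trans (Finset.sum_coe_sort A _).symm

section Newton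

variable {m : ℕ} (p : Fin m → ℕ → ℝ) (α : Fin m → ℕ)

theorem degreeOf_newton_le (i : Fin m) : degreeOf i (newton p α) ≤ α i :=
  calc degreeOf i (newton p α)
      ≤ ∑ k, ∑ j ∈ Finset.range (α k), degreeOf i (X k - C (p k j) : MvPolynomial (Fin m) ℝ) :=
        (degreeOf_prod_le _ _ _).trans (Finset.sum_le_sum fun k _ => degreeOf_prod_le _ _ _)
    _ ≤ ∑ k, ∑ j ∈ Finset.range (α k), if i = k then 1 else 0 := by
        gcongr with k _ j _
        refine (degreeOf_sub_le _ _ _).trans ?_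
        simp [degreeOf_X, degreeOf_C]
    _ = α i := by simp

theorem le_of_mem_support_newton {d : Fin m →₀ ℕ} (hd : d ∈ (newton p α).support) : ⇑d ≤ α :=
  fun i => (monomial_le_degreeOf i hd).trans (degreeOf_newton_le p α i)

theorem monic_newton (o : MonomialOrder (Fin m)) : o.Monic (newton p α) :=
  MonomialOrder.Monic.prod fun k _ => MonomialOrder.Monic.prod fun j _ => o.monic_X_sub_C k (p k j)

theorem degree_newton (o : MonomialOrder (Fin m)) :
    o.degree (newton p α) = Finsupp.equivFunOnFinite.symm α := by
  have hreg : ∀ {f : MvPolynomial (Fin m) ℝ}, o.Monic f → IsRegular (o.leadingCoeff f) :=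
    fun hf => hf.leadingCoeff_eq_one ▸ isRegular_one
  rw [newton, o.degree_prod_of_regular fun k _ => hreg <| MonomialOrder.Monic.prod fun j _ =>
    o.monic_X_sub_C k (p k j)]
  simp_rw [o.degree_prod_of_regular fun j _ => hreg (o.monic_X_sub_C _ (p _ j)),
    o.degree_X_sub_C, Finset.sum_const, Finset.card_range, Finsupp.smul_single_one,
    Finsupp.equivFunOnFinite_symm_eq_sum]

theorem coeff_newton_self : coeff (Finsupp.equivFunOnFinite.symm α) (newton p α) = 1 := by
  rw [← degree_newton p α MonomialOrder.lex]
  exact (monic_newton p α _).coeff_degree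

end Newton

section NewtonMatrix

variable {m : ℕ} (A : Finset (Fin m → ℕ)) (p : Fin m → ℕ → ℝ)

/-- The change of basis from the Newton to the monomial basis: the inverse of `CN_A`. -/
def newtonMatrix : Matrix A A ℝ :=
  fun γ δ => coeff (Finsupp.equivFunOnFinite.symm γ.1) (newton p δ)

theorem newtonMatrix_blockTriangular :
    (newtonMatrix A p).BlockTriangular fun γ => toColex γ.1 := by
  intro γ δ hlt
  by_contra hne
  exact (Pi.toColex_monotone (le_of_mem_support_newton p δ.1 (mem_support_iff.2 hne))).not_gt hlt

theorem det_newtonMatrix : (newtonMatrix A p).det = 1 := by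
  rw [(newtonMatrix_blockTriangular A p).det_of_injective
    (toColex.injective.comp Subtype.val_injective)]
  exact Finset.prod_eq_one fun γ _ => coeff_newton_self p γ.1

theorem newton_eq_sum_newtonMatrix {A : Finset (Fin m → ℕ)} (hA : CompleteIdx A) (δ : A) :
    newton p δ = ∑ γ : A, newtonMatrix A p γ δ • ∏ i, X i ^ γ.1 i :=
  eq_sum_coeff_smul_prod_X_pow fun d hd => hA δ.1 δ.2 d (le_of_mem_support_newton p δ.1 hd)

end NewtonMatrix

theorem canonical_to_newton_general (m : ℕ) (A : Finset (Fin m → ℕ))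
    (hA : CompleteIdx A) (p : Fin m → ℕ → ℝ) :
    (∀ β ∈ A, (∏ i, X i ^ β i) ∈
      Submodule.span ℝ {Q : MvPolynomial (Fin m) ℝ | ∃ α ∈ A, lexLe α β ∧ Q = newton p α}) ∧
    ∃ CN : Matrix {α // α ∈ A} {α // α ∈ A} ℝ,
      (∀ α β : {α // α ∈ A}, lexLt (β : Fin m → ℕ) (α : Fin m → ℕ) → CN α β = 0) ∧
      IsUnit CN ∧
      ∀ β : {α // α ∈ A},
        (∏ i, X i ^ (β : Fin m → ℕ) i) = ∑ α ∈ A.attach, CN α β • newton p ↑α := by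
  set E := newtonMatrix A p
  have hdet : IsUnit E.det := by rw [det_newtonMatrix]; exact isUnit_one
  let _ : Invertible E := E.invertibleOfIsUnitDet hdet
  have hCN : ∀ α β : A, lexLt β.1 α.1 → E⁻¹ α β = 0 := fun α β h =>
    Matrix.blockTriangular_inv_of_blockTriangular (newtonMatrix_blockTriangular A p)
      (lexLt_iff_toColex_lt.1 h)
  have hexp : ∀ β : A, ∏ i, X i ^ β.1 i = ∑ α : A, E⁻¹ α β • newton p α :=
    eq_sum_smul_of_mul_eq_one (newton_eq_sum_newtonMatrix p hA) (E.mul_nonsing_inv hdet)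
  refine ⟨fun β hβ => ?_, E⁻¹, hCN,
    Matrix.isUnit_nonsing_inv_iff.2 (E.isUnit_iff_isUnit_det.2 hdet), ?_⟩
  · rw [hexp ⟨β, hβ⟩]
    refine Submodule.sum_mem _ fun α _ => ?_
    by_cases h : lexLt β α
    · rw [hCN α ⟨β, hβ⟩ h, zero_smul]
      exact zero_mem _
    · exact Submodule.smul_mem _ _ (Submodule.subset_span ⟨α, α.2, lexLe_of_not_lexLt h, rfl⟩)
  · simpa only [Finset.univ_eq_attach] using hexp

/-- For every `β ∈ A` the monomial `x^β` lies in the span of the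
Newton polynomials `{N_α : α ∈ A, α ≤_L β}`; consequently the change-of-basis matrix
`CN_A` from the canonical monomial basis to the Newton basis, defined by
`x^β = Σ_α (CN_A)_{αβ} N_α`, is upper triangular and invertible. -/
theorem canonical_to_newton (m : ℕ) (A : Finset (Fin m → ℕ))
    (hA : CompleteIdx A) (p : Fin m → ℕ → ℝ) (hp : GenDistinct A p) :
    (∀ β ∈ A, (∏ i, X i ^ β i) ∈
      Submodule.span ℝ {Q : MvPolynomial (Fin m) ℝ | ∃ α ∈ A, lexLe α β ∧ Q = newton p α}) ∧
    ∃ CN : Matrix {α // α ∈ A} {α // α ∈ A} ℝ,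
      (∀ α β : {α // α ∈ A}, lexLt (β : Fin m → ℕ) (α : Fin m → ℕ) → CN α β = 0) ∧
      IsUnit CN ∧
      ∀ β : {α // α ∈ A},
        (∏ i, X i ^ (β : Fin m → ℕ) i) = ∑ α ∈ A.attach, CN α β • newton p ↑α :=
  canonical_to_newton_general m A hA p

end
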